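/- arXiv:2010.04604 — 2 statements merged into one kernel-verified Lean document; each statement's English description precedes it below -/
import Mathlib

section
/- For 1 < p < 2 there exists a constant c = c(p) > 0 such that for all vectors x, y in ℝ^N one has |y|^p ≥ |x|^p + p|x|^{p-2} x·(y-x) + c|y-x|^2 (|x|^2 + |y-x|^2)^{(p-2)/2}. -/
open scoped RealInnerProductSpace

open Real Set

/-!
With `z = y - x`, `A = |x|²`, `B = |z|²` and `s = x·z` one has `|x + t z|² = Q t := A + 2 s t + B t²`,
and Cauchy–Schwarz `s² ≤ A B` is the discriminant bound `Q'² ≤ 4 B Q`. Where `Q > 0` it gives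
`(Q^(p/2))'' = (p/2)(p/2 - 1) Q^(p/2-2) Q'² + p B Q^(p/2-1) ≥ p (p-1) B Q^(p/2-1)`, and since
`Q ≤ 2 (A + B)` on `[0, 1]` and `p/2 - 1 < 0`, this is at least `p (p-1)/2 · B (A + B)^(p/2-1)`.
Second-order Taylor on `[0, 1]` then yields the inequality with `c = p (p-1)/4`. If `Q` has a zero
in `[0, 1]` (`y` on the ray opposite to `x`), replace `A` by `A + ε` and let `ε → 0`.
-/

theorem monotoneOn_Icc_of_hasDerivAt_nonneg {f f' : ℝ → ℝ} {a b : ℝ}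
    (hf : ∀ t ∈ Icc a b, HasDerivAt f (f' t) t) (hf' : ∀ t ∈ Icc a b, 0 ≤ f' t) :
    MonotoneOn f (Icc a b) :=
  monotoneOn_of_hasDerivWithinAt_nonneg (convex_Icc a b)
    (fun t ht => (hf t ht).continuousAt.continuousWithinAt)
    (fun t ht => (hf t (interior_subset ht)).hasDerivWithinAt)
    (fun t ht => hf' t (interior_subset ht))

theorem add_add_div_two_le_of_le_secondDeriv {f f' f'' : ℝ → ℝ} {M : ℝ}
    (hf : ∀ t ∈ Icc (0 : ℝ) 1, HasDerivAt f (f' t) t)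
    (hf' : ∀ t ∈ Icc (0 : ℝ) 1, HasDerivAt f' (f'' t) t)
    (hM : ∀ t ∈ Icc (0 : ℝ) 1, M ≤ f'' t) :
    f 0 + f' 0 + M / 2 ≤ f 1 := by
  have hg : MonotoneOn (fun t => f' t - M * t) (Icc 0 1) :=
    monotoneOn_Icc_of_hasDerivAt_nonneg
      (fun t ht => ((hf' t ht).fun_sub ((hasDerivAt_id' t).const_mul M)).congr_deriv (by ring))
      (fun t ht => sub_nonneg.2 (hM t ht))
  have hh : MonotoneOn (fun t => f t - f' 0 * t - M / 2 * t ^ 2) (Icc 0 1) := by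
    refine monotoneOn_Icc_of_hasDerivAt_nonneg (f' := fun t => f' t - M * t - (f' 0 - M * 0))
      (fun t ht => ?_) (fun t ht => sub_nonneg.2 (hg (left_mem_Icc.2 zero_le_one) ht ht.1))
    exact (((hf t ht).fun_sub ((hasDerivAt_id' t).const_mul (f' 0))).fun_sub
      ((hasDerivAt_pow 2 t).const_mul (M / 2))).congr_deriv (by push_cast; ring)
  have := hh (left_mem_Icc.2 zero_le_one) (right_mem_Icc.2 zero_le_one) zero_le_one
  norm_num at this
  linarith

theorem rpow_quadratic_lower_bound_of_pos {p A B s : ℝ} (hp₁ : 1 < p) (hp₂ : p < 2)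
    (hB : 0 ≤ B) (hs : s ^ 2 ≤ A * B)
    (hQ_pos : ∀ t ∈ Icc (0 : ℝ) 1, 0 < A + 2 * s * t + B * t ^ 2) :
    A ^ (p / 2) + p * A ^ (p / 2 - 1) * s + p * (p - 1) / 4 * B * (A + B) ^ (p / 2 - 1)
      ≤ (A + 2 * s + B) ^ (p / 2) := by
  have hA : 0 ≤ A := by simpa using (hQ_pos 0 (left_mem_Icc.2 zero_le_one)).le
  set Q : ℝ → ℝ := fun t => A + 2 * s * t + B * t ^ 2
  set Q' : ℝ → ℝ := fun t => 2 * s + 2 * B * t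
  have hQ_deriv (t : ℝ) : HasDerivAt Q (Q' t) t :=
    ((((hasDerivAt_id' t).const_mul (2 * s)).const_add A).fun_add
      ((hasDerivAt_pow 2 t).const_mul B)).congr_deriv (by push_cast; ring)
  have hQ'_deriv (t : ℝ) : HasDerivAt Q' (2 * B) t :=
    (((hasDerivAt_id' t).const_mul (2 * B)).const_add (2 * s)).congr_deriv (mul_one _)
  have hQ'_sq (t : ℝ) : Q' t ^ 2 ≤ 4 * B * Q t := by
    simp only [Q, Q']; nlinarith
  have hQ_le (t : ℝ) (ht : t ∈ Icc (0 : ℝ) 1) : Q t ≤ 2 * (A + B) := by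
    obtain ⟨h₁, h₂⟩ := abs_le_of_sq_le_sq' (show (2 * s) ^ 2 ≤ (A + B) ^ 2 by
      nlinarith [sq_nonneg (A - B)]) (by positivity)
    simp only [Q]
    nlinarith [mul_nonneg (show 0 ≤ A + B - 2 * s by linarith) ht.1,
      mul_nonneg (mul_nonneg hB ht.1) (sub_nonneg.2 ht.2),
      mul_nonneg (add_nonneg hA hB) (sub_nonneg.2 ht.2)]
  set r := p / 2 with hr
  have hp : p = 2 * r := by rw [hr]; ring
  have hf (t : ℝ) (ht : t ∈ Icc (0 : ℝ) 1) :
      HasDerivAt (fun t => Q t ^ r) (r * Q t ^ (r - 1) * Q' t) t :=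
    ((hQ_deriv t).rpow_const (Or.inl (hQ_pos t ht).ne')).congr_deriv (by ring)
  have hf' (t : ℝ) (ht : t ∈ Icc (0 : ℝ) 1) : HasDerivAt (fun t => r * Q t ^ (r - 1) * Q' t)
      (r * ((r - 1) * Q t ^ (r - 1 - 1) * Q' t ^ 2 + Q t ^ (r - 1) * (2 * B))) t :=
    ((((hQ_deriv t).rpow_const (Or.inl (hQ_pos t ht).ne')).const_mul r).fun_mul
      (hQ'_deriv t)).congr_deriv (by ring)
  have hf''_ge (t : ℝ) (ht : t ∈ Icc (0 : ℝ) 1) : p * (p - 1) / 2 * B * (A + B) ^ (r - 1)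
      ≤ r * ((r - 1) * Q t ^ (r - 1 - 1) * Q' t ^ 2 + Q t ^ (r - 1) * (2 * B)) := by
    have hq := hQ_pos t ht
    have hpow : Q t ^ (r - 1 - 1) * Q t = Q t ^ (r - 1) := by
      rw [← rpow_add_one hq.ne', sub_add_cancel]
    have hQ'_sq' : Q t ^ (r - 1 - 1) * Q' t ^ 2 ≤ 4 * B * Q t ^ (r - 1) :=
      calc Q t ^ (r - 1 - 1) * Q' t ^ 2 ≤ Q t ^ (r - 1 - 1) * (4 * B * Q t) :=
            mul_le_mul_of_nonneg_left (hQ'_sq t) (by positivity)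
        _ = 4 * B * Q t ^ (r - 1) := by rw [← hpow]; ring
    have hQ_rpow : (A + B) ^ (r - 1) / 2 ≤ Q t ^ (r - 1) := by
      have h_two : (1 / 2 : ℝ) ≤ 2 ^ (r - 1) := by
        simpa [rpow_neg_one] using
          rpow_le_rpow_of_exponent_le (show (1 : ℝ) ≤ 2 by norm_num) (show -1 ≤ r - 1 by linarith)
      calc (A + B) ^ (r - 1) / 2 ≤ 2 ^ (r - 1) * (A + B) ^ (r - 1) := by
            nlinarith [rpow_nonneg (add_nonneg hA hB) (r - 1)]
        _ = (2 * (A + B)) ^ (r - 1) := (mul_rpow (by norm_num) (by positivity)).symm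
        _ ≤ Q t ^ (r - 1) := rpow_le_rpow_of_nonpos hq (hQ_le t ht) (by linarith)
    rw [hp]
    nlinarith [mul_le_mul_of_nonpos_left hQ'_sq' (show r * (r - 1) ≤ 0 by nlinarith),
      mul_le_mul_of_nonneg_left hQ_rpow (show 0 ≤ r * (2 * r - 1) * B by
        have : 0 < r * (2 * r - 1) := by nlinarith
        positivity)]
  have := add_add_div_two_le_of_le_secondDeriv hf hf' hf''_ge
  have hQ0 : Q 0 = A := by simp [Q]
  have hQ1 : Q 1 = A + 2 * s + B := by simp [Q]
  have hQ'0 : Q' 0 = 2 * s := by simp [Q']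
  rw [hQ0, hQ1, hQ'0, hr] at this
  linarith

theorem rpow_quadratic_lower_bound {p A B s : ℝ} (hp₁ : 1 < p) (hp₂ : p < 2) (hA : 0 ≤ A)
    (hB : 0 ≤ B) (hs : s ^ 2 ≤ A * B) :
    A ^ (p / 2) + p * A ^ (p / 2 - 1) * s + p * (p - 1) / 4 * B * (A + B) ^ (p / 2 - 1)
      ≤ (A + 2 * s + B) ^ (p / 2) := by
  -- For `A = 0` the term `(A + ε) ^ (p / 2 - 1)` blows up as `ε → 0`, so that case is done directly.
  rcases hA.eq_or_lt with rfl | hA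
  · obtain rfl : s = 0 := by nlinarith
    have hB_rpow : B * B ^ (p / 2 - 1) = B ^ (p / 2) := by
      rw [mul_comm, ← rpow_add_one' hB (by linarith), sub_add_cancel]
    simp only [zero_rpow (show p / 2 ≠ 0 by positivity), mul_zero, zero_add, add_zero, mul_assoc,
      hB_rpow]
    nlinarith [rpow_nonneg hB (p / 2), mul_pos (sub_pos.2 hp₁) (sub_pos.2 hp₂)]
  have hε_bound (ε : ℝ) (hε : 0 < ε) :
      (A + ε) ^ (p / 2) + p * (A + ε) ^ (p / 2 - 1) * s
        + p * (p - 1) / 4 * B * (A + B + ε) ^ (p / 2 - 1) ≤ (A + 2 * s + B + ε) ^ (p / 2) := by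
    have hQ_pos (t : ℝ) : 0 < A + ε + 2 * s * t + B * t ^ 2 := by
      rcases hB.eq_or_lt with rfl | hB
      · obtain rfl : s = 0 := by nlinarith
        linarith
      · nlinarith [sq_nonneg (s + B * t)]
    convert rpow_quadratic_lower_bound_of_pos hp₁ hp₂ hB (by nlinarith) (fun t _ => hQ_pos t)
      using 2 <;> ring_nf
  have hcont (C q : ℝ) (h : C ≠ 0 ∨ 0 ≤ q) :
      ContinuousWithinAt (fun ε => (C + ε) ^ q) (Ioi 0) 0 :=
    (ContinuousAt.rpow_const (by fun_prop) (by simpa using h)).continuousWithinAt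
  have hlhs : ContinuousWithinAt (fun ε => (A + ε) ^ (p / 2) + p * (A + ε) ^ (p / 2 - 1) * s
      + p * (p - 1) / 4 * B * (A + B + ε) ^ (p / 2 - 1)) (Ioi 0) 0 :=
    ((hcont A _ (Or.inl hA.ne')).add (((hcont A _ (Or.inl hA.ne')).const_mul p).mul_const s)).add
      ((hcont (A + B) _ (Or.inl (by positivity))).const_mul _)
  have hrhs := hcont (A + 2 * s + B) (p / 2) (Or.inr (by positivity))
  simpa using ContinuousWithinAt.closure_le (by simp) hlhs hrhs hε_bound

theorem sq_rpow_div_two {r : ℝ} (hr : 0 ≤ r) (q : ℝ) : (r ^ 2) ^ (q / 2) = r ^ q := by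
  rw [← rpow_natCast_mul hr]; norm_num; ring_nf

/-- For `1 < p < 2` there exists `c = c(p) > 0` such that for all vectors `x, y ∈ ℝ^N`,
`|y|^p ≥ |x|^p + p |x|^(p-2) ⟪x, y - x⟫ + c |y - x|^2 (|x|^2 + |y - x|^2)^((p-2)/2)`. -/
theorem stmt_1 (p : ℝ) (hp₁ : 1 < p) (hp₂ : p < 2) :
    ∃ c : ℝ, 0 < c ∧ ∀ (N : ℕ) (x y : EuclideanSpace ℝ (Fin N)),
      ‖y‖ ^ p ≥ ‖x‖ ^ p + p * ‖x‖ ^ (p - 2) * ⟪x, y - x⟫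
        + c * ‖y - x‖ ^ 2 * (‖x‖ ^ 2 + ‖y - x‖ ^ 2) ^ ((p - 2) / 2) := by
  refine ⟨p * (p - 1) / 4, by nlinarith, fun N x y => ?_⟩
  have hCS : ⟪x, y - x⟫ ^ 2 ≤ ‖x‖ ^ 2 * ‖y - x‖ ^ 2 := by
    rw [← mul_pow, ← sq_abs]
    exact pow_le_pow_left₀ (abs_nonneg _) (abs_real_inner_le_norm x (y - x)) 2
  have hy : ‖x‖ ^ 2 + 2 * ⟪x, y - x⟫ + ‖y - x‖ ^ 2 = ‖y‖ ^ 2 := by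
    simpa using (norm_add_sq_real x (y - x)).symm
  have key := rpow_quadratic_lower_bound hp₁ hp₂ (sq_nonneg ‖x‖) (sq_nonneg ‖y - x‖) hCS
  rwa [hy, sq_rpow_div_two (norm_nonneg x), sq_rpow_div_two (norm_nonneg y),
    show p / 2 - 1 = (p - 2) / 2 by ring, sq_rpow_div_two (norm_nonneg x)] at key
end

section
/- For every R > 0 there exists C = C(R) such that for any two measurable sets Ω₁, Ω₂ ⊂ B_R ⊂ ℝ^N with positive measure one has |α(Ω₁) − α(Ω₂)| ≤ C |Ω₁ Δ Ω₂|, where α(Ω) = ∫_{Ω Δ B_1(x_Ω)} |1 − |x − x_Ω|| dx with x_Ω the barycenter of Ω. -/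
open MeasureTheory

/-- The barycenter `x_Ω = (1/|Ω|) ∫_Ω x dx` of a set `Ω ⊆ ℝ^N`. -/
noncomputable def barycenter (N : ℕ) (Ω : Set (EuclideanSpace ℝ (Fin N))) :
    EuclideanSpace ℝ (Fin N) :=
  ((volume Ω).toReal)⁻¹ • ∫ x in Ω, x

/-- The asymmetry `α(Ω) = ∫_{Ω Δ B_1(x_Ω)} |1 − |x − x_Ω|| dx`. -/
noncomputable def asym (N : ℕ) (Ω : Set (EuclideanSpace ℝ (Fin N))) : ℝ :=
  ∫ x in symmDiff Ω (Metric.ball (barycenter N Ω) 1), |1 - ‖x - barycenter N Ω‖|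

/-! Write `g_b x = 1 - ‖x - b‖`. As `g_b ≥ 0` exactly on `B_1(b)`,
`α(Ω) = ∫_{B_1} g_0 - ∫_Ω g_{x_Ω}`. Hence `α(Ω₁) - α(Ω₂)` is a change of domain,
`∫_{Ω₂} g_{x₁} - ∫_{Ω₁} g_{x₁}`, bounded by `(1 + 2R) |Ω₁ Δ Ω₂|`, plus a change of centre, bounded
by `|Ω₂| ‖x₁ - x₂‖`. Since `∫_{Ω₁} (x - x₁) = 0`, we have
`|Ω₂| (x₂ - x₁) = ∫_{Ω₂} (x - x₁) - ∫_{Ω₁} (x - x₁)`, so the change of centre is at most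
`2R |Ω₁ Δ Ω₂|`. -/

open Metric Bornology
open scoped symmDiff

section SetIntegral

variable {α F : Type*} [MeasurableSpace α] {μ : Measure α} [NormedAddCommGroup F]
  [NormedSpace ℝ F] {s t : Set α} {f : α → F}

theorem setIntegral_sub_setIntegral_eq_sdiff (hs : MeasurableSet s) (ht : MeasurableSet t)
    (hfs : IntegrableOn f s μ) (hft : IntegrableOn f t μ) :
    ∫ x in s, f x ∂μ - ∫ x in t, f x ∂μ = ∫ x in s \ t, f x ∂μ - ∫ x in t \ s, f x ∂μ := by
  rw [← integral_inter_add_sdiff ht hfs, ← integral_inter_add_sdiff hs hft, Set.inter_comm]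
  abel

theorem norm_setIntegral_sub_setIntegral_le (hs : MeasurableSet s) (ht : MeasurableSet t)
    (hμs : μ s ≠ ⊤) (hμt : μ t ≠ ⊤) (hfs : IntegrableOn f s μ) (hft : IntegrableOn f t μ)
    {M : ℝ} (hM : ∀ x ∈ s ∆ t, ‖f x‖ ≤ M) :
    ‖∫ x in s, f x ∂μ - ∫ x in t, f x ∂μ‖ ≤ M * μ.real (s ∆ t) := by
  have hst : μ (s \ t) < ⊤ := (measure_mono Set.sdiff_subset).trans_lt hμs.lt_top
  have hts : μ (t \ s) < ⊤ := (measure_mono Set.sdiff_subset).trans_lt hμt.lt_top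
  calc ‖∫ x in s, f x ∂μ - ∫ x in t, f x ∂μ‖
      ≤ ‖∫ x in s \ t, f x ∂μ‖ + ‖∫ x in t \ s, f x ∂μ‖ := by
        rw [setIntegral_sub_setIntegral_eq_sdiff hs ht hfs hft]; exact norm_sub_le _ _
    _ ≤ M * μ.real (s \ t) + M * μ.real (t \ s) := by
        gcongr
        · exact norm_setIntegral_le_of_norm_le_const hst fun x hx => hM x (Or.inl hx)
        · exact norm_setIntegral_le_of_norm_le_const hts fun x hx => hM x (Or.inr hx)
    _ = M * μ.real (s ∆ t) := by rw [measureReal_symmDiff_eq hs ht hμs hμt, mul_add]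

theorem setIntegral_symmDiff_abs_eq {g : α → ℝ} (hs : MeasurableSet s) (ht : MeasurableSet t)
    (hgs : IntegrableOn g s μ) (hgt : IntegrableOn g t μ) (hpos : ∀ x ∈ t, 0 ≤ g x)
    (hneg : ∀ x ∉ t, g x ≤ 0) :
    ∫ x in s ∆ t, |g x| ∂μ = ∫ x in t, g x ∂μ - ∫ x in s, g x ∂μ := by
  rw [setIntegral_sub_setIntegral_eq_sdiff ht hs hgt hgs, Set.symmDiff_def,
    setIntegral_union disjoint_sdiff_sdiff (ht.diff hs) (hgs.mono_set Set.sdiff_subset).abs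
      (hgt.mono_set Set.sdiff_subset).abs,
    setIntegral_congr_fun (hs.diff ht) fun x hx => abs_of_nonpos (hneg x hx.2),
    setIntegral_congr_fun (ht.diff hs) fun x hx => abs_of_nonneg (hpos x hx.1), integral_neg]
  ring

end SetIntegral

section NormedGroup

variable {E F : Type*} [NormedAddCommGroup E] [MeasurableSpace E] [BorelSpace E] {μ : Measure E}
  [NormedAddCommGroup F]

theorem Continuous.integrableOn_of_isBounded [ProperSpace E] [IsFiniteMeasureOnCompacts μ]
    {f : E → F} (hf : Continuous f) {s : Set E} (hs : IsBounded s) : IntegrableOn f s μ :=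
  (hf.locallyIntegrable.integrableOn_isCompact hs.isCompact_closure).mono_set subset_closure

theorem setIntegral_ball_comp_sub [NormedSpace ℝ F] [μ.IsAddRightInvariant] (g : E → F) (b : E)
    (r : ℝ) : ∫ x in ball b r, g (x - b) ∂μ = ∫ y in ball 0 r, g y ∂μ := by
  have hpre : (fun x => x - b) ⁻¹' ball 0 r = ball b r := by
    ext x; simp [dist_eq_norm]
  rw [← hpre]
  exact (measurePreserving_sub_right μ b).setIntegral_preimage_emb
    (measurableEmbedding_subRight b) g (ball 0 r)

theorem setIntegral_symmDiff_ball_abs_one_sub_norm_sub [ProperSpace E]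
    [IsFiniteMeasureOnCompacts μ] [μ.IsAddRightInvariant] {s : Set E} (hs : MeasurableSet s)
    (hs' : IsBounded s) (b : E) :
    ∫ x in s ∆ ball b 1, |1 - ‖x - b‖| ∂μ
      = ∫ y in ball 0 1, (1 - ‖y‖) ∂μ - ∫ x in s, (1 - ‖x - b‖) ∂μ := by
  have hg : Continuous fun x : E => 1 - ‖x - b‖ := by fun_prop
  rw [setIntegral_symmDiff_abs_eq hs measurableSet_ball (hg.integrableOn_of_isBounded hs')
    (hg.integrableOn_of_isBounded isBounded_ball), setIntegral_ball_comp_sub (fun y => 1 - ‖y‖)]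
  · intro x hx
    rw [mem_ball, dist_eq_norm] at hx
    linarith
  · intro x hx
    rw [mem_ball, dist_eq_norm, not_lt] at hx
    linarith

end NormedGroup

section Barycenter

variable {N : ℕ} {Ω Ω₁ Ω₂ : Set (EuclideanSpace ℝ (Fin N))} {R : ℝ}

-- Null `Ω` included: there the junk value `barycenter N Ω = 0` makes both sides vanish.
theorem measureReal_smul_barycenter (hΩ : volume Ω ≠ ⊤) :
    volume.real Ω • barycenter N Ω = ∫ x in Ω, x := by
  rcases eq_or_ne (volume Ω) 0 with h0 | h0
  · rw [Measure.restrict_eq_zero.mpr h0, integral_zero_measure, measureReal_def, h0,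
      ENNReal.toReal_zero, zero_smul]
  · rw [barycenter, ← measureReal_def, smul_smul,
      mul_inv_cancel₀ (a := volume.real Ω) (ENNReal.toReal_ne_zero.mpr ⟨h0, hΩ⟩), one_smul]

theorem setIntegral_sub_const_eq_smul_barycenter_sub (hΩ : IsBounded Ω)
    (c : EuclideanSpace ℝ (Fin N)) :
    ∫ x in Ω, (x - c) = volume.real Ω • (barycenter N Ω - c) := by
  rw [integral_sub (f := fun x => x) (continuous_id.integrableOn_of_isBounded hΩ)
    (integrableOn_const hΩ.measure_lt_top.ne), setIntegral_const, smul_sub,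
    measureReal_smul_barycenter hΩ.measure_lt_top.ne]

theorem norm_barycenter_le (hR : 0 ≤ R) (hΩ : Ω ⊆ closedBall 0 R) : ‖barycenter N Ω‖ ≤ R := by
  have hfin : volume Ω < ⊤ := (isBounded_closedBall.subset hΩ).measure_lt_top
  rcases eq_or_ne (volume.real Ω) 0 with h0 | h0
  · rwa [barycenter, ← measureReal_def, h0, inv_zero, zero_smul, norm_zero]
  have hint : ‖∫ x in Ω, x‖ ≤ R * volume.real Ω :=
    norm_setIntegral_le_of_norm_le_const hfin fun x hx => mem_closedBall_zero_iff.mp (hΩ hx)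
  rw [barycenter, ← measureReal_def, norm_smul,
    Real.norm_of_nonneg (inv_nonneg.mpr measureReal_nonneg)]
  calc (volume.real Ω)⁻¹ * ‖∫ x in Ω, x‖ ≤ (volume.real Ω)⁻¹ * (R * volume.real Ω) := by gcongr
    _ = R := by field_simp

theorem measureReal_mul_norm_barycenter_sub_le (hR : 0 ≤ R) (h₁ : MeasurableSet Ω₁)
    (h₂ : MeasurableSet Ω₂) (hs₁ : Ω₁ ⊆ closedBall 0 R) (hs₂ : Ω₂ ⊆ closedBall 0 R) :
    volume.real Ω₁ * ‖barycenter N Ω₁ - barycenter N Ω₂‖ ≤ 2 * R * volume.real (Ω₁ ∆ Ω₂) := by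
  set b₂ := barycenter N Ω₂
  have hbd₁ : IsBounded Ω₁ := isBounded_closedBall.subset hs₁
  have hbd₂ : IsBounded Ω₂ := isBounded_closedBall.subset hs₂
  have hmoment : volume.real Ω₁ • (barycenter N Ω₁ - b₂)
      = (∫ x in Ω₁, (x - b₂)) - ∫ x in Ω₂, (x - b₂) := by
    rw [setIntegral_sub_const_eq_smul_barycenter_sub hbd₁,
      setIntegral_sub_const_eq_smul_barycenter_sub hbd₂, sub_self, smul_zero, sub_zero]
  have hg : Continuous fun x : EuclideanSpace ℝ (Fin N) => x - b₂ := by fun_prop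
  have hbound : ∀ x ∈ Ω₁ ∆ Ω₂, ‖x - b₂‖ ≤ 2 * R := by
    intro x hx
    have hx' : ‖x‖ ≤ R := mem_closedBall_zero_iff.mp
      ((Set.symmDiff_subset_union.trans (Set.union_subset hs₁ hs₂)) hx)
    linarith [norm_sub_le x b₂, norm_barycenter_le hR hs₂]
  calc volume.real Ω₁ * ‖barycenter N Ω₁ - b₂‖
        = ‖volume.real Ω₁ • (barycenter N Ω₁ - b₂)‖ := by
        rw [norm_smul, Real.norm_of_nonneg measureReal_nonneg]
    _ ≤ 2 * R * volume.real (Ω₁ ∆ Ω₂) := by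
      rw [hmoment]
      exact norm_setIntegral_sub_setIntegral_le h₁ h₂ hbd₁.measure_lt_top.ne
        hbd₂.measure_lt_top.ne (hg.integrableOn_of_isBounded hbd₁)
        (hg.integrableOn_of_isBounded hbd₂) hbound

theorem asym_eq (hΩ : MeasurableSet Ω) (hΩ' : IsBounded Ω) :
    asym N Ω = (∫ y in ball (0 : EuclideanSpace ℝ (Fin N)) 1, (1 - ‖y‖))
      - ∫ x in Ω, (1 - ‖x - barycenter N Ω‖) :=
  setIntegral_symmDiff_ball_abs_one_sub_norm_sub hΩ hΩ' _

theorem abs_asym_sub_asym_le (hR : 0 ≤ R) (h₁ : MeasurableSet Ω₁) (h₂ : MeasurableSet Ω₂)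
    (hs₁ : Ω₁ ⊆ closedBall 0 R) (hs₂ : Ω₂ ⊆ closedBall 0 R) :
    |asym N Ω₁ - asym N Ω₂| ≤ (1 + 4 * R) * volume.real (Ω₁ ∆ Ω₂) := by
  have hbd₁ : IsBounded Ω₁ := isBounded_closedBall.subset hs₁
  have hbd₂ : IsBounded Ω₂ := isBounded_closedBall.subset hs₂
  rw [asym_eq h₁ hbd₁, asym_eq h₂ hbd₂]
  set b₁ := barycenter N Ω₁
  set b₂ := barycenter N Ω₂
  have hg (b : EuclideanSpace ℝ (Fin N)) : Continuous fun x => 1 - ‖x - b‖ := by fun_prop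
  have hcenter : |(∫ x in Ω₂, (1 - ‖x - b₂‖)) - ∫ x in Ω₂, (1 - ‖x - b₁‖)|
      ≤ 2 * R * volume.real (Ω₁ ∆ Ω₂) := by
    rw [← integral_sub ((hg b₂).integrableOn_of_isBounded hbd₂)
      ((hg b₁).integrableOn_of_isBounded hbd₂), ← Real.norm_eq_abs]
    calc ‖∫ x in Ω₂, ((1 - ‖x - b₂‖) - (1 - ‖x - b₁‖))‖ ≤ ‖b₂ - b₁‖ * volume.real Ω₂ := by
          refine norm_setIntegral_le_of_norm_le_const hbd₂.measure_lt_top fun x _ => ?_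
          simpa only [sub_sub_sub_cancel_left, Real.norm_eq_abs]
            using abs_norm_sub_norm_le (x - b₁) (x - b₂)
      _ ≤ 2 * R * volume.real (Ω₁ ∆ Ω₂) := by
          rw [mul_comm, symmDiff_comm]
          exact measureReal_mul_norm_barycenter_sub_le hR h₂ h₁ hs₂ hs₁
  have hdomain : |(∫ x in Ω₂, (1 - ‖x - b₁‖)) - ∫ x in Ω₁, (1 - ‖x - b₁‖)|
      ≤ (1 + 2 * R) * volume.real (Ω₁ ∆ Ω₂) := by
    rw [← Real.norm_eq_abs, symmDiff_comm]
    refine norm_setIntegral_sub_setIntegral_le h₂ h₁ hbd₂.measure_lt_top.ne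
      hbd₁.measure_lt_top.ne ((hg b₁).integrableOn_of_isBounded hbd₂)
      ((hg b₁).integrableOn_of_isBounded hbd₁) fun x hx => ?_
    have hx : ‖x‖ ≤ R := mem_closedBall_zero_iff.mp
      ((Set.symmDiff_subset_union.trans (Set.union_subset hs₂ hs₁)) hx)
    rw [Real.norm_eq_abs, abs_le]
    constructor <;> linarith [norm_sub_le x b₁, norm_nonneg (x - b₁), norm_barycenter_le hR hs₁]
  calc _ = |((∫ x in Ω₂, (1 - ‖x - b₂‖)) - ∫ x in Ω₂, (1 - ‖x - b₁‖))
          + ((∫ x in Ω₂, (1 - ‖x - b₁‖)) - ∫ x in Ω₁, (1 - ‖x - b₁‖))| := by ring_nf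
    _ ≤ 2 * R * volume.real (Ω₁ ∆ Ω₂) + (1 + 2 * R) * volume.real (Ω₁ ∆ Ω₂) :=
        (abs_add_le _ _).trans (add_le_add hcenter hdomain)
    _ = (1 + 4 * R) * volume.real (Ω₁ ∆ Ω₂) := by ring

end Barycenter

theorem stmt_10_general (N : ℕ) (R m : ℝ) (hR : 0 < R) :
    ∃ C : ℝ, 0 < C ∧ ∀ Ω₁ Ω₂ : Set (EuclideanSpace ℝ (Fin N)),
      MeasurableSet Ω₁ → MeasurableSet Ω₂ →
      Ω₁ ⊆ Metric.ball 0 R → Ω₂ ⊆ Metric.ball 0 R →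
      ENNReal.ofReal m ≤ volume Ω₁ → ENNReal.ofReal m ≤ volume Ω₂ →
      |asym N Ω₁ - asym N Ω₂| ≤ C * (volume (symmDiff Ω₁ Ω₂)).toReal :=
  ⟨1 + 4 * R, by positivity, fun _ _ h₁ h₂ hs₁ hs₂ _ _ =>
    abs_asym_sub_asym_le hR.le h₁ h₂ (hs₁.trans ball_subset_closedBall)
      (hs₂.trans ball_subset_closedBall)⟩

/-- For every `R > 0` and lower volume bound `m > 0` there is `C = C(R, m) > 0` such that
`|α(Ω₁) − α(Ω₂)| ≤ C |Ω₁ Δ Ω₂|` for all measurable `Ω₁, Ω₂ ⊆ B_R` of measure at least `m`. -/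
theorem stmt_10 (N : ℕ) (hN : 1 ≤ N) (R m : ℝ) (hR : 0 < R) (hm : 0 < m) :
    ∃ C : ℝ, 0 < C ∧ ∀ Ω₁ Ω₂ : Set (EuclideanSpace ℝ (Fin N)),
      MeasurableSet Ω₁ → MeasurableSet Ω₂ →
      Ω₁ ⊆ Metric.ball 0 R → Ω₂ ⊆ Metric.ball 0 R →
      ENNReal.ofReal m ≤ volume Ω₁ → ENNReal.ofReal m ≤ volume Ω₂ →
      |asym N Ω₁ - asym N Ω₂| ≤ C * (volume (symmDiff Ω₁ Ω₂)).toReal :=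
  stmt_10_general N R m hR
end
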